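/- arXiv:2505.02941 — 7 statements merged into one kernel-verified Lean document; each statement's English description precedes it below -/
import Mathlib

section
/- Let A and B be n×n matrices over a commutative ring, and let 1 ≤ i ≤ n. If A is lower-triangular or B is upper-triangular, then the leading principal i×i minor of AB equals the product of the leading principal i×i minors of A and B. -/
open Matrix

/- Entry `(p, q)` of `A * B` is `∑ₖ A p k * B k q`. For `p, q < i`, a term with `k ≥ i` vanishes
because `A p k = 0` (when `A` is lower-triangular) or `B k q = 0` (when `B` is upper-triangular).
So the leading `i × i` block of `A * B` is the product of the leading blocks of `A` and `B`, and
the minors multiply by `det_mul`. -/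

theorem Fin.castLE_lt_of_notMem_range_castLEEmb {n i : ℕ} {hin : i ≤ n} {k : Fin n}
    (hk : k ∉ Set.range (Fin.castLEEmb hin)) (p : Fin i) : Fin.castLE hin p < k := by
  simp only [Set.mem_range, not_exists] at hk
  by_contra! hkp
  exact hk ⟨k, (Fin.le_iff_val_le_val.mp hkp).trans_lt p.isLt⟩ rfl

namespace Matrix

variable {R : Type*} [NonUnitalNonAssocSemiring R]

theorem submatrix_mul_of_mul_eq_zero_of_notMem_range {l m n o p q : Type*} [Fintype m]
    [Fintype n] (A : Matrix l m R) (B : Matrix m o R) (r : p → l) (e : n ↪ m) (c : q → o)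
    (h : ∀ i j k, k ∉ Set.range e → A (r i) k * B k (c j) = 0) :
    (A * B).submatrix r c = A.submatrix r e * B.submatrix e c := by
  ext i j
  simp only [mul_apply, submatrix_apply]
  rw [← Finset.sum_map Finset.univ e (fun k => A (r i) k * B k (c j))]
  refine (Finset.sum_subset (Finset.subset_univ _) fun k _ hk => h i j k ?_).symm
  simpa using hk

variable {n i : ℕ} (hin : i ≤ n) (A B : Matrix (Fin n) (Fin n) R)

theorem submatrix_castLE_mul_of_lowerTriangular (hA : ∀ p q : Fin n, p < q → A p q = 0) :
    (A * B).submatrix (Fin.castLE hin) (Fin.castLE hin) =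
      A.submatrix (Fin.castLE hin) (Fin.castLE hin) *
        B.submatrix (Fin.castLE hin) (Fin.castLE hin) := by
  refine submatrix_mul_of_mul_eq_zero_of_notMem_range A B _ (Fin.castLEEmb hin) _
    fun p _ k hk => ?_
  rw [hA _ _ (Fin.castLE_lt_of_notMem_range_castLEEmb hk p), zero_mul]

theorem submatrix_castLE_mul_of_upperTriangular (hB : ∀ p q : Fin n, q < p → B p q = 0) :
    (A * B).submatrix (Fin.castLE hin) (Fin.castLE hin) =
      A.submatrix (Fin.castLE hin) (Fin.castLE hin) *
        B.submatrix (Fin.castLE hin) (Fin.castLE hin) := by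
  refine submatrix_mul_of_mul_eq_zero_of_notMem_range A B _ (Fin.castLEEmb hin) _
    fun _ q k hk => ?_
  rw [hB _ _ (Fin.castLE_lt_of_notMem_range_castLEEmb hk q), mul_zero]

end Matrix

theorem stmt0_general {R : Type*} [CommRing R] {n i : ℕ} (hin : i ≤ n)
    (A B : Matrix (Fin n) (Fin n) R)
    (h : (∀ p q : Fin n, p < q → A p q = 0) ∨ (∀ p q : Fin n, q < p → B p q = 0)) :
    ((A * B).submatrix (Fin.castLE hin) (Fin.castLE hin)).det =
      (A.submatrix (Fin.castLE hin) (Fin.castLE hin)).det *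
        (B.submatrix (Fin.castLE hin) (Fin.castLE hin)).det := by
  rcases h with hA | hB
  · rw [submatrix_castLE_mul_of_lowerTriangular hin A B hA, det_mul]
  · rw [submatrix_castLE_mul_of_upperTriangular hin A B hB, det_mul]

/-- If `A` is lower-triangular or `B` is upper-triangular, the leading principal
`i × i` minor of `A * B` is the product of the leading principal `i × i` minors
of `A` and `B`. -/
theorem stmt0 {R : Type*} [CommRing R] {n i : ℕ} (hi1 : 1 ≤ i) (hin : i ≤ n)
    (A B : Matrix (Fin n) (Fin n) R)
    (h : (∀ p q : Fin n, p < q → A p q = 0) ∨ (∀ p q : Fin n, q < p → B p q = 0)) :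
    ((A * B).submatrix (Fin.castLE hin) (Fin.castLE hin)).det =
      (A.submatrix (Fin.castLE hin) (Fin.castLE hin)).det *
        (B.submatrix (Fin.castLE hin) (Fin.castLE hin)).det :=
  stmt0_general hin A B h
end

section
/- Let A and B be n×n matrices over a field with B invertible, and let 1 ≤ i ≤ n-1. Then det((AB)_{[i+1,n]}^{[i+1,n]}) equals det(B) times the determinant of the n×n matrix whose first i rows are the first i rows of B^{-1} and whose last n-i rows are the last n-i rows of A. -/
open Matrix

/-- For `B` invertible and `1 ≤ i ≤ n-1`, the trailing `(n-i) × (n-i)` principal minor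
of `A * B` equals `det B` times the determinant of the matrix whose first `i` rows are
those of `B⁻¹` and whose last `n - i` rows are those of `A`. -/
theorem stmt1 {K : Type*} [Field K] {n i : ℕ} (hi1 : 1 ≤ i) (hin : i ≤ n - 1)
    (A B : Matrix (Fin n) (Fin n) K) (hB : IsUnit B.det) :
    ((A * B).submatrix
        (fun j : Fin (n - i) => (⟨i + (j : ℕ), by have := j.isLt; omega⟩ : Fin n))
        (fun j : Fin (n - i) => (⟨i + (j : ℕ), by have := j.isLt; omega⟩ : Fin n))).det =
      B.det *
        (Matrix.of (fun p q : Fin n => if (p : ℕ) < i then B⁻¹ p q else A p q)).det := by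
  have hn : i + (n - i) = n := by omega
  set M : Matrix (Fin n) (Fin n) K :=
    Matrix.of (fun p q : Fin n => if (p : ℕ) < i then B⁻¹ p q else A p q) with hM
  set C : Matrix (Fin n) (Fin n) K :=
    Matrix.of (fun p q : Fin n =>
      if (p : ℕ) < i then (1 : Matrix (Fin n) (Fin n) K) p q else (A * B) p q) with hC
  have hMB : M * B = C := by
    ext p q
    simp only [Matrix.mul_apply, hM, hC, Matrix.of_apply]
    by_cases hp : (p : ℕ) < i
    · simp only [hp, if_true]
      have := Matrix.nonsing_inv_mul B hB
      calc ∑ j, B⁻¹ p j * B j q = (B⁻¹ * B) p q := (Matrix.mul_apply).symm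
        _ = (1 : Matrix (Fin n) (Fin n) K) p q := by rw [this]
    · simp [hp, Matrix.mul_apply]
  let e : Fin i ⊕ Fin (n - i) ≃ Fin n := finSumFinEquiv.trans (finCongr hn)
  have hCe : C.submatrix e e =
      Matrix.fromBlocks 1 0
        ((A * B).submatrix
          (fun j : Fin (n - i) => (⟨i + (j : ℕ), by have := j.isLt; omega⟩ : Fin n))
          (fun a : Fin i => (⟨(a : ℕ), by omega⟩ : Fin n)))
        ((A * B).submatrix
          (fun j : Fin (n - i) => (⟨i + (j : ℕ), by have := j.isLt; omega⟩ : Fin n))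
          (fun j : Fin (n - i) => (⟨i + (j : ℕ), by have := j.isLt; omega⟩ : Fin n))) := by
    ext p q
    have he1 : ∀ a : Fin i, ((e (Sum.inl a)) : ℕ) = (a : ℕ) := fun a => rfl
    have he2 : ∀ b : Fin (n - i), ((e (Sum.inr b)) : ℕ) = i + (b : ℕ) := fun b => rfl
    cases p with
    | inl a =>
      cases q with
      | inl b =>
        simp only [Matrix.submatrix_apply, hC, Matrix.of_apply, he1, a.isLt, if_true,
          Matrix.fromBlocks_apply₁₁, Matrix.one_apply]
        have : e (Sum.inl a) = e (Sum.inl b) ↔ a = b := by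
          constructor
          · intro h; exact Sum.inl_injective (e.injective h)
          · intro h; rw [h]
        simp [this]
      | inr b =>
        simp only [Matrix.submatrix_apply, hC, Matrix.of_apply, he1, a.isLt, if_true,
          Matrix.fromBlocks_apply₁₂, Matrix.zero_apply, Matrix.one_apply]
        have : (e (Sum.inl a) : ℕ) ≠ (e (Sum.inr b) : ℕ) := by
          rw [he1, he2]; omega
        have h2 : e (Sum.inl a) ≠ e (Sum.inr b) := fun h => this (by rw [h])
        rw [if_neg h2]
    | inr a =>
      cases q with
      | inl b =>
        have hlt : ¬ ((e (Sum.inr a) : ℕ) < i) := by rw [he2]; omega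
        simp only [Matrix.submatrix_apply, hC, Matrix.of_apply, hlt, if_false,
          Matrix.fromBlocks_apply₂₁]
        congr 1 <;> exact Fin.ext (by simp [he1, he2])
      | inr b =>
        have hlt : ¬ ((e (Sum.inr a) : ℕ) < i) := by rw [he2]; omega
        simp only [Matrix.submatrix_apply, hC, Matrix.of_apply, hlt, if_false,
          Matrix.fromBlocks_apply₂₂]
        congr 1 <;> exact Fin.ext (by simp [he1, he2])
  have hdetC : C.det =
      ((A * B).submatrix
        (fun j : Fin (n - i) => (⟨i + (j : ℕ), by have := j.isLt; omega⟩ : Fin n))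
        (fun j : Fin (n - i) => (⟨i + (j : ℕ), by have := j.isLt; omega⟩ : Fin n))).det := by
    rw [← Matrix.det_submatrix_equiv_self e C, hCe, Matrix.det_fromBlocks_zero₁₂,
      Matrix.det_one, one_mul]
  have : M.det * B.det = C.det := by rw [← Matrix.det_mul, hMB]
  rw [← hdetC, ← this]; ring
end

section
/- Let L = M N^{-1}, where M is the upper bidiagonal n×n matrix with diagonal entries z_1,…,z_n and superdiagonal entries -1, and N is the lower bidiagonal n×n matrix with diagonal entries 1 and subdiagonal entries -Q_1 z_1, …, -Q_{n-1} z_{n-1}. Then det(ζE - L) = Σ_{i=0}^{n} (-1)^i F_i(z,Q) ζ^{n-i}, where F_i(z,Q) = Σ_{J ⊆ {1,…,n}, |J|=i} ∏_{j∈J, j+1∉J} (1-Q_j) ∏_{j∈J} z_j. -/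
/-!
Since `det N = 1`, `det (ζE - M N⁻¹) = det (ζN - M)`, and `ζN - M` is tridiagonal, so its
leading principal minors obey the continuant recurrence
`D_{n+2} = (ζ - z_{n+2}) D_{n+1} + ζ Q_{n+1} z_{n+1} D_n`.
For the generating polynomial `P_n(Q) = Σ_{J ⊆ {1,…,n}} (-1)^|J| w_Q(J) ζ^(n-|J|)` of the weights
in `F_i`, splitting off `n + 1 ∈ J` gives
`P_{n+1}(Q) = ζ P_n(Q) - (1 - Q_{n+1}) z_{n+1} P_n(Q[Q_n := 0])`, because `n + 1 ∈ J` kills the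
factor `1 - Q_n`. As `P_n` only sees `Q_1, …, Q_n`, both sides satisfy the same recurrence and
`D_n = P_n(Q[Q_n := 0])`, which is the claim when `Q_n = 0`.
-/

open Matrix Polynomial

/-- The conserved quantities of the relativistic Toda lattice:
`F_i(z,Q) = Σ_{J ⊆ {1,…,n}, |J|=i} ∏_{j∈J, j+1∉J} (1-Q_j) ∏_{j∈J} z_j`. -/
noncomputable def todaF {K : Type*} [Field K] (n : ℕ) (z Q : ℕ → K) (i : ℕ) : K :=
  ∑ J ∈ (Finset.Icc 1 n).powersetCard i,
    (∏ j ∈ J.filter (fun j => j + 1 ∉ J), (1 - Q j)) * ∏ j ∈ J, z j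

namespace Matrix

variable {R : Type*} [CommRing R]

def tridiagonal (a b c : ℕ → R) (n : ℕ) : Matrix (Fin n) (Fin n) R :=
  Matrix.of fun i j =>
    if (i : ℕ) = j then a i
    else if (i : ℕ) + 1 = j then b i
    else if (j : ℕ) + 1 = i then c j
    else 0

variable (a b c : ℕ → R)

@[simp]
theorem tridiagonal_submatrix_castSucc (n : ℕ) :
    (tridiagonal a b c (n + 1)).submatrix Fin.castSucc Fin.castSucc = tridiagonal a b c n := by
  ext i j
  simp [tridiagonal]

theorem det_tridiagonal_submatrix_castSucc_succAbove (n : ℕ) :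
    ((tridiagonal a b c (n + 2)).submatrix Fin.castSucc (Fin.last n).castSucc.succAbove).det =
      b n * (tridiagonal a b c n).det := by
  have hcol : (Fin.last n).castSucc.succAbove (Fin.last n) = Fin.last (n + 1) := by
    simp [Fin.succAbove_of_le_castSucc]
  rw [det_succ_column _ (Fin.last n), Fin.sum_univ_castSucc]
  have hfar : ∀ k : Fin n, tridiagonal a b c (n + 2) k.castSucc.castSucc (Fin.last _) = 0 := by
    intro k
    simp only [tridiagonal, of_apply, Fin.val_last, Fin.val_castSucc]
    rw [if_neg (by omega), if_neg (by omega), if_neg (by omega)]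
  have hb : tridiagonal a b c (n + 2) (Fin.last n).castSucc (Fin.last _) = b n := by
    simp [tridiagonal]
  have hrest : ((tridiagonal a b c (n + 2)).submatrix Fin.castSucc
      (Fin.last n).castSucc.succAbove).submatrix Fin.castSucc Fin.castSucc =
      tridiagonal a b c n := by
    ext i j
    simp [tridiagonal, Fin.succAbove_of_castSucc_lt, Fin.castSucc_lt_castSucc_iff]
  simp only [submatrix_apply, hcol, hfar, hb, hrest, zero_mul, mul_zero, Finset.sum_const_zero,
    zero_add, Fin.succAbove_last]
  simp [← two_mul, pow_mul]

theorem det_tridiagonal_succ_succ (n : ℕ) :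
    (tridiagonal a b c (n + 2)).det =
      a (n + 1) * (tridiagonal a b c (n + 1)).det - b n * c n * (tridiagonal a b c n).det := by
  rw [det_succ_row _ (Fin.last _), Fin.sum_univ_castSucc, Fin.sum_univ_castSucc]
  have hfar : ∀ k : Fin n, tridiagonal a b c (n + 2) (Fin.last _) k.castSucc.castSucc = 0 := by
    intro k
    simp only [tridiagonal, of_apply, Fin.val_last, Fin.val_castSucc]
    rw [if_neg (by omega), if_neg (by omega), if_neg (by omega)]
  have ha : tridiagonal a b c (n + 2) (Fin.last _) (Fin.last _) = a (n + 1) := by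
    simp [tridiagonal]
  have hc : tridiagonal a b c (n + 2) (Fin.last _) (Fin.last n).castSucc = c n := by
    simp [tridiagonal]
    omega
  simp only [hfar, ha, hc, zero_mul, mul_zero, Finset.sum_const_zero, zero_add, Fin.succAbove_last,
    det_tridiagonal_submatrix_castSucc_succAbove, tridiagonal_submatrix_castSucc, Fin.val_last,
    Fin.val_castSucc]
  rw [show n + 1 + n = 2 * n + 1 by ring, show n + 1 + (n + 1) = 2 * (n + 1) by ring, pow_succ,
    pow_mul, pow_mul, neg_one_sq, one_pow, one_pow]
  ring

theorem charpoly_mul_nonsing_inv {n R : Type*} [Fintype n] [DecidableEq n] [CommRing R]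
    (M N : Matrix n n R) (hN : IsUnit N.det) :
    (M * N⁻¹).charpoly = ((X : R[X]) • N.map C - M.map C).det * C N⁻¹.det := by
  have hmul : N * N⁻¹ = 1 := mul_nonsing_inv N hN
  have : charmatrix (M * N⁻¹) = ((X : R[X]) • N.map C - M.map C) * N⁻¹.map C := by
    rw [charmatrix, sub_mul, smul_mul_assoc, ← Matrix.map_mul, hmul, Matrix.map_one C
      (map_zero C) (map_one C), ← Matrix.map_mul, RingHom.mapMatrix_apply,
      Matrix.scalar_apply, smul_one_eq_diagonal]
  rw [charpoly, this, det_mul, RingHom.map_det]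
  rfl

end Matrix

open Finset

section Toda

variable {R : Type*} [CommRing R] (z Q : ℕ → R)

def todaWeight (J : Finset ℕ) : R :=
  (∏ j ∈ J.filter (fun j => j + 1 ∉ J), (1 - Q j)) * ∏ j ∈ J, z j

theorem todaWeight_update_of_notMem {J : Finset ℕ} {m : ℕ} (hm : m ∉ J) (x : R) :
    todaWeight z (Function.update Q m x) J = todaWeight z Q J := by
  unfold todaWeight
  congr 1
  refine prod_congr rfl fun j hj => ?_
  rw [Function.update_of_ne (ne_of_mem_of_not_mem (mem_filter.1 hj).1 hm)]

theorem todaWeight_insert {n : ℕ} {J : Finset ℕ} (hJ : J ⊆ Icc 1 n) :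
    todaWeight z Q (insert (n + 1) J) =
      (1 - Q (n + 1)) * z (n + 1) * todaWeight z (Function.update Q n 0) J := by
  have hn : ∀ j ∈ J, j ≤ n := fun j hj => (mem_Icc.1 (hJ hj)).2
  have hnJ : n + 1 ∉ J := fun h => by have := hn _ h; omega
  unfold todaWeight
  rw [prod_filter, prod_filter, prod_insert hnJ, prod_insert hnJ,
    if_pos (by simp only [mem_insert]; rintro (h | h); omega; have := hn _ h; omega)]
  have hfactor : ∀ j ∈ J, (if j + 1 ∉ insert (n + 1) J then 1 - Q j else 1) =
      if j + 1 ∉ J then 1 - Function.update Q n 0 j else 1 := by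
    intro j hj
    rcases eq_or_ne j n with rfl | hjn
    · simp
    · simp [hjn]
  rw [prod_congr rfl hfactor]
  ring

noncomputable def todaPoly (n : ℕ) : R[X] :=
  ∑ J ∈ (Icc 1 n).powerset, (-1) ^ #J * C (todaWeight z Q J) * X ^ (n - #J)

theorem todaPoly_eq_sum_todaF {K : Type*} [Field K] (z Q : ℕ → K) (n : ℕ) :
    todaPoly z Q n = ∑ i ∈ range (n + 1), (-1) ^ i * C (todaF n z Q i) * X ^ (n - i) := by
  rw [todaPoly, sum_powerset, Nat.card_Icc, Nat.add_sub_cancel]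
  refine sum_congr rfl fun i _ => ?_
  rw [todaF, map_sum, mul_sum, sum_mul]
  refine sum_congr rfl fun J hJ => ?_
  rw [(mem_powersetCard.1 hJ).2]
  rfl

theorem todaPoly_zero : todaPoly z Q 0 = 1 := by
  simp [todaPoly, todaWeight]

theorem todaPoly_update_of_lt {n m : ℕ} (h : n < m) (x : R) :
    todaPoly z (Function.update Q m x) n = todaPoly z Q n := by
  refine sum_congr rfl fun J hJ => ?_
  have hm : m ∉ J := fun hm => by have := (mem_Icc.1 (mem_powerset.1 hJ hm)).2; omega
  rw [todaWeight_update_of_notMem z Q hm]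

theorem todaPoly_succ (n : ℕ) :
    todaPoly z Q (n + 1) =
      X * todaPoly z Q n -
        C ((1 - Q (n + 1)) * z (n + 1)) * todaPoly z (Function.update Q n 0) n := by
  have hnot : n + 1 ∉ Icc 1 n := by simp
  rw [todaPoly, ← insert_Icc_right_eq_Icc_add_one (by omega), sum_powerset_insert hnot,
    todaPoly, todaPoly, mul_sum, mul_sum, sub_eq_add_neg, ← sum_neg_distrib]
  congr 1
  · refine sum_congr rfl fun J hJ => ?_
    have hcard : #J ≤ n := by simpa using card_le_card (mem_powerset.1 hJ)
    rw [show n + 1 - #J = n - #J + 1 by omega, pow_succ]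
    ring
  · refine sum_congr rfl fun J hJ => ?_
    have hJ' := mem_powerset.1 hJ
    rw [card_insert_of_notMem (fun h => hnot (hJ' h)), todaWeight_insert z Q hJ',
      Nat.add_sub_add_right, pow_succ, map_mul]
    ring

theorem todaPoly_succ_eq_add (n : ℕ) :
    todaPoly z Q (n + 1) = todaPoly z (Function.update Q (n + 1) 0) (n + 1) +
      C (Q (n + 1) * z (n + 1)) * todaPoly z (Function.update Q n 0) n := by
  rw [todaPoly_succ, todaPoly_succ, Function.update_self,
    todaPoly_update_of_lt z Q (lt_add_one n), Function.update_comm (by omega),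
    todaPoly_update_of_lt _ _ (lt_add_one n)]
  simp only [map_mul, map_sub, map_one, map_zero]
  ring

noncomputable def todaPencil (n : ℕ) : Matrix (Fin n) (Fin n) R[X] :=
  tridiagonal (fun i => X - C (z (i + 1))) (fun _ => 1)
    (fun i => -(X * C (Q (i + 1) * z (i + 1)))) n

theorem det_todaPencil : ∀ n : ℕ, (todaPencil z Q n).det = todaPoly z (Function.update Q n 0) n
  | 0 => by simp [todaPoly_zero]
  | 1 => by simp [todaPencil, todaPoly_succ, todaPoly_zero, tridiagonal]
  | n + 2 => by
    rw [todaPencil, det_tridiagonal_succ_succ, ← todaPencil, ← todaPencil, det_todaPencil (n + 1),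
      det_todaPencil n, todaPoly_succ z _ (n + 1), Function.update_self,
      todaPoly_update_of_lt z Q (show n + 1 < n + 2 by omega),
      Function.update_comm (show n + 2 ≠ n + 1 by omega),
      todaPoly_update_of_lt _ _ (show n + 1 < n + 2 by omega), todaPoly_succ_eq_add z Q n]
    simp only [map_mul, map_sub, map_one, map_zero]
    ring

end Toda

/-- With `L = M N⁻¹` the Lax matrix of the relativistic Toda lattice,
`det(ζE - L) = Σ_{i=0}^{n} (-1)^i F_i(z,Q) ζ^{n-i}`. -/
theorem stmt3 {K : Type*} [Field K] (n : ℕ) (z Q : ℕ → K) (hQn : Q n = 0)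
    (M N : Matrix (Fin n) (Fin n) K)
    (hM : ∀ p q : Fin n, M p q =
      if p = q then z ((p : ℕ) + 1) else if (p : ℕ) + 1 = (q : ℕ) then -1 else 0)
    (hN : ∀ p q : Fin n, N p q =
      if p = q then 1
      else if (q : ℕ) + 1 = (p : ℕ) then -(Q ((q : ℕ) + 1) * z ((q : ℕ) + 1)) else 0) :
    (M * N⁻¹).charpoly =
      ∑ i ∈ Finset.range (n + 1),
        (-1 : Polynomial K) ^ i * Polynomial.C (todaF n z Q i) * Polynomial.X ^ (n - i) := by
  have hN1 : N.det = 1 := by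
    rw [det_of_isLowerTriangular N fun p q (hpq : p < q) => by
      rw [hN, if_neg hpq.ne, if_neg (by have : (p : ℕ) < q := hpq; omega)]]
    simp [hN]
  have hpencil : (X : K[X]) • N.map C - M.map C = todaPencil z Q n := by
    refine Matrix.ext fun p q => ?_
    simp only [Matrix.sub_apply, Matrix.smul_apply, map_apply, hM, hN, todaPencil, tridiagonal,
      of_apply, Fin.val_inj]
    split_ifs <;> first | omega | simp_all
  rw [charpoly_mul_nonsing_inv M N (by simp [hN1]), det_nonsing_inv, hN1, Ring.inverse_one,
    map_one, mul_one, hpencil, det_todaPencil, ← hQn, Function.update_eq_self,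
    todaPoly_eq_sum_todaF]
end

section
/- With L as above, for 1 ≤ a ≤ b ≤ n, the principal minor of L on the index interval [a,b] equals (1 - Q_b) z_a z_{a+1} ⋯ z_b, where Q_n := 0. -/
open Matrix

/-- Sum of a function supported on two points. -/
lemma sum_pair_support {M : Type*} [AddCommMonoid M] {n : ℕ} (f : Fin n → M) (p q : Fin n)
    (hpq : p ≠ q) (h : ∀ r, r ≠ p → r ≠ q → f r = 0) :
    ∑ r, f r = f p + f q := by
  rw [← Finset.sum_subset (Finset.subset_univ ({p, q} : Finset (Fin n)))
      (fun r _ hr => h r (fun h1 => hr (by simp [h1])) (fun h2 => hr (by simp [h2])))]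
  exact Finset.sum_pair hpq

/-- Peel off the bottom element of a product over `Icc`. -/
lemma prod_Icc_bot {K : Type*} [CommMonoid K] (f : ℕ → K) {c d : ℕ} (h : c ≤ d) :
    ∏ k ∈ Finset.Icc c d, f k = f c * ∏ k ∈ Finset.Icc (c + 1) d, f k := by
  rw [Finset.Icc_add_one_left_eq_Ioc, ← Finset.Ioc_insert_left h,
    Finset.prod_insert Finset.left_notMem_Ioc]

/-- With `L = M N⁻¹` the Lax matrix of the relativistic Toda lattice and `1 ≤ a ≤ b ≤ n`,
the principal minor of `L` on the index interval `[a,b]` equals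
`(1 - Q_b) z_a z_{a+1} ⋯ z_b`, with the convention `Q_n = 0`. -/
theorem stmt4 {K : Type*} [Field K] (n : ℕ) (z Q : ℕ → K) (hQn : Q n = 0)
    (M N : Matrix (Fin n) (Fin n) K)
    (hM : ∀ p q : Fin n, M p q =
      if p = q then z ((p : ℕ) + 1) else if (p : ℕ) + 1 = (q : ℕ) then -1 else 0)
    (hN : ∀ p q : Fin n, N p q =
      if p = q then 1
      else if (q : ℕ) + 1 = (p : ℕ) then -(Q ((q : ℕ) + 1) * z ((q : ℕ) + 1)) else 0)
    (a b : ℕ) (ha : 1 ≤ a) (hab : a ≤ b) (hbn : b ≤ n) :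
    ((M * N⁻¹).submatrix
        (fun j : Fin (b - a + 1) => (⟨a - 1 + (j : ℕ), by have := j.isLt; omega⟩ : Fin n))
        (fun j : Fin (b - a + 1) => (⟨a - 1 + (j : ℕ), by have := j.isLt; omega⟩ : Fin n))).det =
      (1 - Q b) * ∏ j ∈ Finset.Icc a b, z j := by
  classical
  -- the explicit inverse of `N`
  set P : Matrix (Fin n) (Fin n) K :=
    Matrix.of fun p q : Fin n =>
      if (q : ℕ) ≤ (p : ℕ) then ∏ k ∈ Finset.Icc ((q : ℕ) + 1) ((p : ℕ)), (Q k * z k)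
      else 0 with hPdef
  have hPapp : ∀ p q : Fin n, P p q =
      if (q : ℕ) ≤ (p : ℕ) then ∏ k ∈ Finset.Icc ((q : ℕ) + 1) ((p : ℕ)), (Q k * z k)
      else 0 := fun p q => rfl
  have hNP : N * P = 1 := by
    ext p q
    rw [Matrix.mul_apply, Matrix.one_apply]
    by_cases hp0 : (p : ℕ) = 0
    · rw [Fintype.sum_eq_single p (fun r hr => ?_)]
      · rw [hN, hPapp, if_pos rfl, one_mul]
        by_cases hq : (q : ℕ) ≤ (p : ℕ)
        · have hpq : p = q := Fin.ext (by omega)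
          rw [if_pos hq, if_pos hpq, Finset.Icc_eq_empty (by omega), Finset.prod_empty]
        · rw [if_neg hq, if_neg (fun h => hq (by rw [h]))]
      · rw [hN, if_neg (fun h => hr (h.symm)), if_neg (by omega), zero_mul]
    · have hp1 : 1 ≤ (p : ℕ) := by omega
      set p' : Fin n := ⟨(p : ℕ) - 1, by omega⟩ with hp'
      have hpp' : p ≠ p' := by
        intro h
        have : (p : ℕ) = (p' : ℕ) := by rw [h]
        simp [hp'] at this; omega
      rw [sum_pair_support _ p p' hpp' (fun r h1 h2 => ?_)]
      · rw [hN, hN, if_pos rfl, one_mul, if_neg hpp',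
          if_pos (show (p' : ℕ) + 1 = (p : ℕ) by simp [hp']; omega)]
        have hc : (p' : ℕ) + 1 = (p : ℕ) := by simp [hp']; omega
        rw [hc, hPapp, hPapp]
        rcases lt_trichotomy (q : ℕ) (p : ℕ) with hlt | heq | hgt
        · have hqp' : (q : ℕ) ≤ (p' : ℕ) := by simp [hp']; omega
          rw [if_pos (le_of_lt hlt), if_pos hqp',
            if_neg (show p ≠ q from fun h => by rw [h] at hlt; omega)]
          have hsplit : ∏ k ∈ Finset.Icc ((q : ℕ) + 1) ((p : ℕ)), (Q k * z k)
              = (∏ k ∈ Finset.Icc ((q : ℕ) + 1) ((p' : ℕ)), (Q k * z k))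
                * (Q ((p' : ℕ) + 1) * z ((p' : ℕ) + 1)) := by
            rw [← Finset.prod_Icc_succ_top (by simp [hp']; omega), hc]
          rw [hsplit, hc]
          ring
        · have hpq : p = q := Fin.ext heq.symm
          rw [if_pos (le_of_eq heq), if_neg (show ¬ (q : ℕ) ≤ (p' : ℕ) by simp [hp']; omega),
            if_pos hpq, Finset.Icc_eq_empty (by omega), Finset.prod_empty]
          ring
        · rw [if_neg (by omega), if_neg (show ¬ (q : ℕ) ≤ (p' : ℕ) by simp [hp']; omega),
            if_neg (show p ≠ q from fun h => by rw [h] at hgt; omega)]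
          ring
      · rw [hN, if_neg (fun h => h1 (h.symm)),
          if_neg (fun h => h2 (Fin.ext (by simp [hp']; omega))), zero_mul]
  rw [Matrix.inv_eq_right_inv hNP]
  -- the entries of L = M * P
  have hL : ∀ p q : Fin n, (M * P) p q =
      if (q : ℕ) ≤ (p : ℕ) then
        (1 - Q ((p : ℕ) + 1)) * z ((p : ℕ) + 1)
          * ∏ k ∈ Finset.Icc ((q : ℕ) + 1) ((p : ℕ)), (Q k * z k)
      else if (q : ℕ) = (p : ℕ) + 1 then -1 else 0 := by
    intro p q
    rw [Matrix.mul_apply]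
    by_cases hp : (p : ℕ) + 1 < n
    · set p'' : Fin n := ⟨(p : ℕ) + 1, hp⟩ with hp''
      have hppp : p ≠ p'' := by
        intro h
        have : (p : ℕ) = (p'' : ℕ) := by rw [h]
        simp [hp''] at this
      rw [sum_pair_support _ p p'' hppp (fun r h1 h2 => ?_)]
      · rw [hM, hM, if_pos rfl, if_neg hppp,
          if_pos (show (p : ℕ) + 1 = (p'' : ℕ) by simp [hp'']), hPapp, hPapp]
        have hcv : (p'' : ℕ) = (p : ℕ) + 1 := by simp [hp'']
        rw [hcv]
        rcases lt_trichotomy (q : ℕ) ((p : ℕ) + 1) with hlt | heq | hgt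
        · have hq : (q : ℕ) ≤ (p : ℕ) := by omega
          rw [if_pos hq, if_pos (by omega), if_pos hq,
            Finset.prod_Icc_succ_top (show (q : ℕ) + 1 ≤ (p : ℕ) + 1 by omega)]
          ring
        · rw [if_neg (by omega), if_pos (by omega), if_neg (by omega), if_pos heq,
            Finset.Icc_eq_empty (by omega), Finset.prod_empty]
          ring
        · rw [if_neg (by omega), if_neg (by omega), if_neg (by omega), if_neg (by omega)]
          ring
      · rw [hM, if_neg (fun h => h1 (h.symm)),
          if_neg (fun h => h2 (Fin.ext (by simp [hp'']; omega))), zero_mul]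
    · have hpn : (p : ℕ) + 1 = n := by have := p.isLt; omega
      rw [Fintype.sum_eq_single p (fun r hr => ?_)]
      · rw [hM, hPapp, if_pos rfl, hpn, hQn]
        by_cases hq : (q : ℕ) ≤ (p : ℕ)
        · rw [if_pos hq, if_pos hq]; ring
        · rw [if_neg hq, if_neg hq, if_neg (show ¬ (q : ℕ) = n by have := q.isLt; omega),
            mul_zero]
      · rw [hM, if_neg (fun h => hr (h.symm)),
          if_neg (show ¬ (p : ℕ) + 1 = (r : ℕ) by have := r.isLt; omega), zero_mul]
  -- the generalized statement for an abstract index embedding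
  have key : ∀ f : Fin (b - a + 1) → Fin n, (∀ j, (f j : ℕ) = a - 1 + (j : ℕ)) →
      ((M * P).submatrix f f).det = (1 - Q b) * ∏ j ∈ Finset.Icc a b, z j := by
    intro f hf
    -- det of the N-submatrix is 1
    have hNsub : (N.submatrix f f).det = 1 := by
      rw [Matrix.det_of_lowerTriangular _ (fun i j hij => ?_)]
      · apply Finset.prod_eq_one
        intro j _
        rw [Matrix.submatrix_apply, hN, if_pos rfl]
      · have hij' : (i : ℕ) < (j : ℕ) := hij
        rw [Matrix.submatrix_apply, hN,
          if_neg (fun h => by have := congrArg Fin.val h; rw [hf, hf] at this; omega),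
          if_neg (by rw [hf, hf]; omega)]
    -- entries of T = L_sub * N_sub
    set T := (M * P).submatrix f f * N.submatrix f f with hT
    have hTapp : ∀ i j : Fin (b - a + 1),
        T i j = ∑ k, (M * P) (f i) (f k) * N (f k) (f j) := by
      intro i j
      rw [hT, Matrix.mul_apply]
      simp [Matrix.submatrix_apply]
    have hTval : ∀ i j : Fin (b - a + 1), T i j =
        if (j : ℕ) = b - a then
          (if i = j then (1 - Q b) * z b else
            if (j : ℕ) < (i : ℕ) then 0 else T i j)
        else
          (if i = j then z (a + (j : ℕ)) else
            if (j : ℕ) < (i : ℕ) then 0 else T i j) := by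
      intro i j
      by_cases hj : (j : ℕ) + 1 < b - a + 1
      · -- two spikes: k = j and k = j+1
        set j' : Fin (b - a + 1) := ⟨(j : ℕ) + 1, hj⟩ with hj'
        have hjj' : j ≠ j' := by
          intro h
          have : (j : ℕ) = (j' : ℕ) := by rw [h]
          simp [hj'] at this
        have hfj : (f j : ℕ) = a - 1 + (j : ℕ) := hf j
        have hfj' : (f j' : ℕ) = a - 1 + (j : ℕ) + 1 := by rw [hf]; simp [hj']; omega
        have hfi : (f i : ℕ) = a - 1 + (i : ℕ) := hf i
        have hNjj : N (f j) (f j) = 1 := by rw [hN, if_pos rfl]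
        have hNj'j : N (f j') (f j) =
            -(Q (a - 1 + (j : ℕ) + 1) * z (a - 1 + (j : ℕ) + 1)) := by
          rw [hN, if_neg (fun h => hjj' (Fin.ext (by
              have := congrArg Fin.val h; rw [hfj, hfj'] at this; omega)).symm),
            if_pos (by rw [hfj, hfj']), hfj]
        have hsum : T i j = (M * P) (f i) (f j)
            + (M * P) (f i) (f j') * -(Q (a - 1 + (j : ℕ) + 1) * z (a - 1 + (j : ℕ) + 1)) := by
          rw [hTapp, sum_pair_support _ j j' hjj' (fun r h1 h2 => ?_), hNjj, hNj'j, mul_one]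
          rw [hN, if_neg (fun h => h1 (Fin.ext (by
              have := congrArg Fin.val h; rw [hf, hf] at this; omega))),
            if_neg (fun h => h2 (Fin.ext (by rw [hf, hf] at h; simp [hj']; omega))),
            mul_zero]
        rw [if_neg (show ¬ (j : ℕ) = b - a by omega)]
        rcases lt_trichotomy (i : ℕ) (j : ℕ) with hlt | heq | hgt
        · rw [if_neg (fun h => by rw [h] at hlt; omega), if_neg (by omega)]
        · have hij : i = j := Fin.ext heq
          subst hij
          rw [if_pos rfl, hsum, hL, hL, if_pos (le_refl _),
            if_neg (show ¬ (f j' : ℕ) ≤ (f i : ℕ) by rw [hfj', hfi]; omega),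
            if_pos (show (f j' : ℕ) = (f i : ℕ) + 1 by rw [hfj', hfi]),
            Finset.Icc_eq_empty (by omega), Finset.prod_empty, hfi]
          have h1 : a - 1 + (i : ℕ) + 1 = a + (i : ℕ) := by omega
          rw [h1]
          ring
        · rw [if_neg (fun h => by rw [h] at hgt; omega), if_pos hgt, hsum, hL, hL,
            if_pos (show (f j : ℕ) ≤ (f i : ℕ) by rw [hfj, hfi]; omega),
            if_pos (show (f j' : ℕ) ≤ (f i : ℕ) by rw [hfj', hfi]; omega),
            hfj, hfj', hfi,
            prod_Icc_bot (fun k => Q k * z k)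
              (show a - 1 + (j : ℕ) + 1 ≤ a - 1 + (i : ℕ) by omega)]
          ring
      · -- last column: single spike k = j
        have hjtop : (j : ℕ) = b - a := by have := j.isLt; omega
        have hfj : (f j : ℕ) = a - 1 + (j : ℕ) := hf j
        have hfi : (f i : ℕ) = a - 1 + (i : ℕ) := hf i
        have hNjj : N (f j) (f j) = 1 := by rw [hN, if_pos rfl]
        have hsum : T i j = (M * P) (f i) (f j) := by
          rw [hTapp, Fintype.sum_eq_single j (fun r hr => ?_), hNjj, mul_one]
          rw [hN, if_neg (fun h => hr (Fin.ext (by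
              have := congrArg Fin.val h; rw [hf, hf] at this; omega))),
            if_neg (by rw [hf, hf]; have := r.isLt; omega), mul_zero]
        rw [if_pos hjtop]
        rcases lt_trichotomy (i : ℕ) (j : ℕ) with hlt | heq | hgt
        · rw [if_neg (fun h => by rw [h] at hlt; omega), if_neg (by omega)]
        · have hij : i = j := Fin.ext heq
          subst hij
          rw [if_pos rfl, hsum, hL, if_pos (le_refl _),
            Finset.Icc_eq_empty (by omega), Finset.prod_empty, hfi]
          have h1 : a - 1 + (i : ℕ) + 1 = b := by omega
          rw [h1]
          ring
        · exfalso; have := i.isLt; omega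
      -- end hTval
    have hTlow : T.BlockTriangular id := by
      intro i j hij
      have hij' : (j : ℕ) < (i : ℕ) := hij
      have hne : ¬ i = j := fun h => by rw [h] at hij'; exact lt_irrefl _ hij'
      rw [hTval i j]
      by_cases h1 : (j : ℕ) = b - a
      · rw [if_pos h1, if_neg hne, if_pos hij']
      · rw [if_neg h1, if_neg hne, if_pos hij']
    have hdet1 : ((M * P).submatrix f f).det = T.det := by
      rw [hT, Matrix.det_mul, hNsub, mul_one]
    rw [hdet1, Matrix.det_of_upperTriangular hTlow]
    have hdiag : ∀ j : Fin (b - a + 1), T j j =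
        if (j : ℕ) = b - a then (1 - Q b) * z b else z (a + (j : ℕ)) := by
      intro j
      rw [hTval j j]
      by_cases h1 : (j : ℕ) = b - a
      · rw [if_pos h1, if_pos rfl, if_pos h1]
      · rw [if_neg h1, if_pos rfl, if_neg h1]
    calc ∏ j : Fin (b - a + 1), T j j
        = ∏ j : Fin (b - a + 1),
            (if (j : ℕ) = b - a then (1 - Q b) * z b else z (a + (j : ℕ))) :=
          Finset.prod_congr rfl (fun j _ => hdiag j)
      _ = (1 - Q b) * ∏ j ∈ Finset.Icc a b, z j := by
          rw [Fin.prod_univ_castSucc]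
          have hlast : ((Fin.last (b - a) : Fin (b - a + 1)) : ℕ) = b - a := rfl
          rw [if_pos hlast]
          have hsmall : ∀ j : Fin (b - a),
              (if ((Fin.castSucc j : Fin (b - a + 1)) : ℕ) = b - a then (1 - Q b) * z b
                else z (a + ((Fin.castSucc j : Fin (b - a + 1)) : ℕ)))
              = z (a + (j : ℕ)) := by
            intro j
            rw [if_neg (by simp [Fin.coe_castSucc]; omega)]
            simp [Fin.coe_castSucc]
          rw [Finset.prod_congr rfl (fun j _ => hsmall j),
            Fin.prod_univ_eq_prod_range (fun k => z (a + k)),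
            ← Finset.Ico_add_one_right_eq_Icc, Finset.prod_Ico_eq_prod_range]
          have h1 : b + 1 - a = (b - a) + 1 := by omega
          rw [h1, Finset.prod_range_succ]
          have h2 : a + (b - a) = b := by omega
          rw [h2]
          ring
  exact key _ (fun j => rfl)
end

section
/- Let A be the upper bidiagonal n×n matrix with diagonal entries e^{-a_1},…,e^{-a_n} and superdiagonal entries -1, and let P be the lower unitriangular matrix with P_{i,j} = e_{i-j}(e^{-a_1},…,e^{-a_{i-1}}) for i ≥ j (elementary symmetric polynomials). Then P^{-1} A P equals the companion matrix C_A with (C_A)_{i,i+1} = -1 for 1 ≤ i ≤ n-1, bottom row (C_A)_{n,j} = e_{n-j+1}(e^{-a_1},…,e^{-a_n}) arranged as (e_n^{(n)}, e_{n-1}^{(n)}, …, e_1^{(n)}), and all other entries zero. -/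
open Matrix

/-- The elementary symmetric polynomial `e_k(x_1, …, x_m)`. -/
def esym {R : Type*} [CommRing R] (x : ℕ → R) (k m : ℕ) : R :=
  ∑ J ∈ (Finset.Icc 1 m).powersetCard k, ∏ j ∈ J, x j

lemma esym_zero {R : Type*} [CommRing R] (x : ℕ → R) (m : ℕ) : esym x 0 m = 1 := by
  simp [esym]

lemma esym_eq_zero {R : Type*} [CommRing R] (x : ℕ → R) {k m : ℕ} (h : m < k) :
    esym x k m = 0 := by
  have : (Finset.Icc 1 m).powersetCard k = ∅ := by
    rw [Finset.powersetCard_eq_empty]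
    simpa using h
  simp [esym, this]

lemma esym_succ {R : Type*} [CommRing R] (x : ℕ → R) (k m : ℕ) :
    esym x (k + 1) (m + 1) = esym x (k + 1) m + x (m + 1) * esym x k m := by
  have hnot : (m + 1) ∉ Finset.Icc 1 m := by simp
  have hins : Finset.Icc 1 (m + 1) = insert (m + 1) (Finset.Icc 1 m) := by
    ext j; simp [Finset.mem_Icc]; omega
  rw [esym, hins, Finset.powersetCard_succ_insert hnot]
  rw [Finset.sum_union]
  · congr 1
    have hinj : ∀ J ∈ (Finset.Icc 1 m).powersetCard k, ∀ K ∈ (Finset.Icc 1 m).powersetCard k,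
        insert (m + 1) J = insert (m + 1) K → J = K := by
      intro J hJ K hK hJK
      have hJ' : (m + 1) ∉ J := fun hm => hnot ((Finset.mem_powersetCard.mp hJ).1 hm)
      have hK' : (m + 1) ∉ K := fun hm => hnot ((Finset.mem_powersetCard.mp hK).1 hm)
      have := congrArg (Finset.erase · (m + 1)) hJK
      simpa [Finset.erase_insert hJ', Finset.erase_insert hK'] using this
    rw [Finset.sum_image hinj, esym, Finset.mul_sum]
    refine Finset.sum_congr rfl fun J hJ => ?_
    have hJ' : (m + 1) ∉ J := fun hm => hnot ((Finset.mem_powersetCard.mp hJ).1 hm)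
    rw [Finset.prod_insert hJ']
  · rw [Finset.disjoint_right]
    intro J hJ hJ'
    obtain ⟨K, hK, rfl⟩ := Finset.mem_image.mp hJ
    exact hnot ((Finset.mem_powersetCard.mp hJ').1 (Finset.mem_insert_self _ _))

set_option maxHeartbeats 1000000 in
/-- With `A` upper bidiagonal with diagonal `x_1,…,x_n` and superdiagonal `-1`, and
`P` the lower unitriangular matrix with `P_{i,j} = e_{i-j}(x_1,…,x_{i-1})`,
one has `P⁻¹ A P = C_A`, the companion matrix with superdiagonal `-1` and bottom row
`(e_n, e_{n-1}, …, e_1)` of the elementary symmetric polynomials in `x_1, …, x_n`. -/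
theorem stmt5 {R : Type*} [CommRing R] (n : ℕ) (x : ℕ → R)
    (A P CA : Matrix (Fin n) (Fin n) R)
    (hA : ∀ p q : Fin n, A p q =
      if p = q then x ((p : ℕ) + 1) else if (p : ℕ) + 1 = (q : ℕ) then -1 else 0)
    (hP : ∀ p q : Fin n, P p q =
      if (q : ℕ) ≤ (p : ℕ) then esym x ((p : ℕ) - (q : ℕ)) (p : ℕ) else 0)
    (hCA : ∀ p q : Fin n, CA p q =
      if (p : ℕ) = n - 1 then esym x (n - (q : ℕ)) n
      else if (p : ℕ) + 1 = (q : ℕ) then -1 else 0) :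
    P⁻¹ * A * P = CA := by
  rcases Nat.eq_zero_or_pos n with rfl | hn
  · exact Subsingleton.elim _ _
  -- P is lower triangular with ones on the diagonal
  have hPdet : P.det = 1 := by
    rw [det_of_lowerTriangular P (by
      intro i j hij
      rw [hP]
      rw [if_neg]
      exact fun h => absurd (Fin.le_def.mpr h) (not_le.mpr hij))]
    refine Finset.prod_eq_one fun i _ => ?_
    rw [hP, if_pos le_rfl, Nat.sub_self, esym_zero]
  have hPunit : IsUnit P.det := by rw [hPdet]; exact isUnit_one
  -- key: A * P = P * CA
  have key : A * P = P * CA := by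
    ext p q
    rw [mul_apply, mul_apply]
    have hq : (q : ℕ) < n := q.isLt
    have hp : (p : ℕ) < n := p.isLt
    -- LHS
    have hL : ∑ k, A p k * P k q =
        x ((p : ℕ) + 1) * P p q -
        (if h : (p : ℕ) + 1 < n then P ⟨(p : ℕ) + 1, h⟩ q else 0) := by
      by_cases h : (p : ℕ) + 1 < n
      · rw [Finset.sum_eq_add_of_mem p ⟨(p : ℕ) + 1, h⟩ (Finset.mem_univ _)
          (Finset.mem_univ _) (by intro heq; exact absurd (congrArg Fin.val heq) (by simp))
          (fun k _ hk => ?_), dif_pos h]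
        · rw [hA, hA, if_pos rfl, if_neg (by intro heq; exact absurd (congrArg Fin.val heq) (by simp)),
            if_pos rfl]
          ring
        · rcases hk with ⟨hk1, hk2⟩
          rw [hA, if_neg (Ne.symm hk1), if_neg (fun hh => hk2 (Fin.ext hh.symm)), zero_mul]
      · rw [Finset.sum_eq_single p (fun k _ hk => ?_) (by simp), dif_neg h, hA, if_pos rfl,
          sub_zero]
        rw [hA, if_neg (Ne.symm hk), if_neg (fun hh => ?_), zero_mul]
        exact h (hh ▸ (k : Fin n).isLt)
    -- RHS
    have hlast : ((⟨n - 1, by omega⟩ : Fin n) : ℕ) = n - 1 := rfl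
    have hR : ∑ k, P p k * CA k q =
        P p ⟨n - 1, by omega⟩ * esym x (n - (q : ℕ)) n -
        (if h : 1 ≤ (q : ℕ) then P p ⟨(q : ℕ) - 1, by omega⟩ else 0) := by
      by_cases h : 1 ≤ (q : ℕ)
      · have hne : (⟨n - 1, by omega⟩ : Fin n) ≠ ⟨(q : ℕ) - 1, by omega⟩ := by
          intro heq
          have := congrArg Fin.val heq
          simp at this; omega
        rw [Finset.sum_eq_add_of_mem _ _ (Finset.mem_univ _) (Finset.mem_univ _) hne
          (fun k _ hk => ?_), dif_pos h]
        · rw [hCA, hCA, if_pos rfl, if_neg (by simp; omega), if_pos (by simp; omega)]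
          ring
        · rcases hk with ⟨hk1, hk2⟩
          rw [hCA, if_neg (fun hh => hk1 (Fin.ext hh)), if_neg (fun hh => hk2 (Fin.ext (by simp; omega))),
            mul_zero]
      · rw [Finset.sum_eq_single (⟨n - 1, by omega⟩ : Fin n) (fun k _ hk => ?_) (by simp),
          dif_neg h, hCA, if_pos rfl, sub_zero]
        rw [hCA, if_neg (fun hh => hk (Fin.ext hh)), if_neg (by omega), mul_zero]
    rw [hL, hR]
    have hPl : P p ⟨n - 1, by omega⟩ = (if (p : ℕ) + 1 < n then 0 else 1) := by
      rw [hP]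
      by_cases hpl : (p : ℕ) + 1 < n
      · rw [if_pos hpl, if_neg (show ¬ ((n - 1 : ℕ) ≤ (p : ℕ)) by omega)]
      · rw [if_neg hpl, if_pos (show (n - 1 : ℕ) ≤ (p : ℕ) by omega)]
        have : (p : ℕ) - (n - 1) = 0 := by omega
        rw [this, esym_zero]
    by_cases hpl : (p : ℕ) + 1 < n
    · -- p is not the last row
      rw [dif_pos hpl, hPl, if_pos hpl, zero_mul, zero_sub]
      by_cases h1 : 1 ≤ (q : ℕ)
      · rw [dif_pos h1]
        have hq3 : P p ⟨(q : ℕ) - 1, by omega⟩ =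
            (if (q : ℕ) - 1 ≤ (p : ℕ) then esym x ((p : ℕ) - ((q : ℕ) - 1)) (p : ℕ) else 0) := by
          rw [hP]
        rw [hq3]
        by_cases h2 : (q : ℕ) ≤ (p : ℕ)
        · have hq1 : P p q = esym x ((p : ℕ) - (q : ℕ)) (p : ℕ) := by
            rw [hP]; exact if_pos h2
          have hq2 : P ⟨(p : ℕ) + 1, hpl⟩ q = esym x ((p : ℕ) + 1 - (q : ℕ)) ((p : ℕ) + 1) := by
            rw [hP]; exact if_pos (show (q : ℕ) ≤ (p : ℕ) + 1 by omega)
          rw [hq1, hq2, if_pos (show (q : ℕ) - 1 ≤ (p : ℕ) by omega)]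
          have e1 : (p : ℕ) + 1 - (q : ℕ) = ((p : ℕ) - (q : ℕ)) + 1 := by omega
          have e2 : (p : ℕ) - ((q : ℕ) - 1) = ((p : ℕ) - (q : ℕ)) + 1 := by omega
          rw [e1, e2, esym_succ]
          ring
        · have hq1 : P p q = 0 := by rw [hP]; exact if_neg h2
          by_cases h3 : (q : ℕ) ≤ (p : ℕ) + 1
          · have hq2 : P ⟨(p : ℕ) + 1, hpl⟩ q = esym x ((p : ℕ) + 1 - (q : ℕ)) ((p : ℕ) + 1) := by
              rw [hP]; exact if_pos (show (q : ℕ) ≤ (p : ℕ) + 1 by omega)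
            rw [hq1, hq2, if_pos (show (q : ℕ) - 1 ≤ (p : ℕ) by omega)]
            have e1 : (p : ℕ) + 1 - (q : ℕ) = 0 := by omega
            have e2 : (p : ℕ) - ((q : ℕ) - 1) = 0 := by omega
            rw [e1, e2, esym_zero, esym_zero]
            ring
          · have hq2 : P ⟨(p : ℕ) + 1, hpl⟩ q = 0 := by
              rw [hP]; exact if_neg (show ¬ ((q : ℕ) ≤ (p : ℕ) + 1) by omega)
            rw [hq1, hq2, if_neg (show ¬ ((q : ℕ) - 1 ≤ (p : ℕ)) by omega)]
            ring
      · rw [dif_neg h1]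
        have hq0 : (q : ℕ) = 0 := by omega
        have hq1 : P p q = esym x ((p : ℕ) - (q : ℕ)) (p : ℕ) := by
          rw [hP]; exact if_pos (by omega)
        have hq2 : P ⟨(p : ℕ) + 1, hpl⟩ q = esym x ((p : ℕ) + 1 - (q : ℕ)) ((p : ℕ) + 1) := by
          rw [hP]; exact if_pos (show (q : ℕ) ≤ (p : ℕ) + 1 by omega)
        rw [hq1, hq2, hq0]
        simp only [Nat.sub_zero]
        rw [esym_succ, esym_eq_zero x (show (p : ℕ) < (p : ℕ) + 1 by omega)]
        ring
    · -- p is the last row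
      have hpn : (p : ℕ) = n - 1 := by omega
      rw [dif_neg hpl, hPl, if_neg hpl, one_mul]
      have hq1 : P p q = esym x ((p : ℕ) - (q : ℕ)) (p : ℕ) := by
        rw [hP]; exact if_pos (by omega)
      rw [hq1]
      by_cases h1 : 1 ≤ (q : ℕ)
      · rw [dif_pos h1]
        have hq3 : P p ⟨(q : ℕ) - 1, by omega⟩ = esym x ((p : ℕ) - ((q : ℕ) - 1)) (p : ℕ) := by
          rw [hP]; exact if_pos (show (q : ℕ) - 1 ≤ (p : ℕ) by omega)
        rw [hq3]
        have hrec := esym_succ x (n - (q : ℕ) - 1) (n - 1)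
        have e1 : n - (q : ℕ) - 1 + 1 = n - (q : ℕ) := by omega
        have e2 : n - 1 + 1 = n := by omega
        rw [e1, e2] at hrec
        have e3 : (p : ℕ) - (q : ℕ) = n - (q : ℕ) - 1 := by omega
        have e4 : (p : ℕ) - ((q : ℕ) - 1) = n - (q : ℕ) := by omega
        rw [e3, e4, hpn, e2, hrec]
        ring
      · rw [dif_neg h1]
        have hq0 : (q : ℕ) = 0 := by omega
        rw [hq0]
        simp only [Nat.sub_zero]
        have hrec := esym_succ x (n - 1) (n - 1)
        have e2 : n - 1 + 1 = n := by omega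
        rw [e2] at hrec
        rw [hpn, e2, hrec, esym_eq_zero x (show n - 1 < n by omega)]
        ring
  calc P⁻¹ * A * P = P⁻¹ * (A * P) := by rw [Matrix.mul_assoc]
    _ = P⁻¹ * (P * CA) := by rw [key]
    _ = CA := by rw [← Matrix.mul_assoc, Matrix.nonsing_inv_mul P hPunit, Matrix.one_mul]
end

section
/- Let D_i be the Demazure operator D_i = 1 + (1-e^{α_i})^{-1}(s_i - 1) acting on Laurent polynomials in e^{a_1},…,e^{a_n}, where α_i = a_i - a_{i+1} and s_i swaps a_i and a_{i+1}. Then for 1 ≤ i ≤ n-1, j with i < j ≤ n, and m ≥ 0: D_i applied to h_m(e^{-a_{i+1}}, e^{-a_{i+2}},…, e^{-a_j}) equals h_m(e^{-a_i}, e^{-a_{i+1}},…, e^{-a_j}). -/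
/-- The complete homogeneous symmetric polynomial `h_m` in the variables
`x_a, x_{a+1}, …, x_b`. -/
noncomputable def hseg {K : Type*} [Field K] (x : ℕ → K) (m a b : ℕ) : K :=
  ∑ t ∈ (Finset.Icc a b).sym m, (Multiset.map x t.1).prod

lemma hseg_zero {K : Type*} [Field K] (x : ℕ → K) (a b : ℕ) : hseg x 0 a b = 1 := by
  simp [hseg, Finset.sym_zero]
  rfl

lemma hseg_congr {K : Type*} [Field K] {x y : ℕ → K} {m a b : ℕ}
    (h : ∀ l ∈ Finset.Icc a b, x l = y l) : hseg x m a b = hseg y m a b := by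
  unfold hseg
  refine Finset.sum_congr rfl fun t ht => ?_
  congr 1
  refine Multiset.map_congr rfl fun l hl => ?_
  exact h l (Finset.mem_sym_iff.mp ht l hl)

lemma hseg_peel {K : Type*} [Field K] (x : ℕ → K) (m a b : ℕ) (hab : a ≤ b) :
    hseg x (m + 1) a b = hseg x (m + 1) (a + 1) b + x a * hseg x m a b := by
  unfold hseg
  rw [← Finset.sum_filter_add_sum_filter_not ((Finset.Icc a b).sym (m + 1)) (fun t => a ∈ t),
    add_comm]
  congr 1
  · -- not containing a
    have h1 : ((Finset.Icc a b).sym (m + 1)).filter (fun t => ¬ a ∈ t)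
        = (Finset.Icc (a + 1) b).sym (m + 1) := by
      ext t
      simp only [Finset.mem_filter, Finset.mem_sym_iff, Finset.mem_Icc]
      constructor
      · rintro ⟨h, ha⟩ l hl
        have := h l hl
        have : l ≠ a := fun e => ha (e ▸ hl)
        omega
      · intro h
        exact ⟨fun l hl => by have := h l hl; omega, fun ha => by have := h a ha; omega⟩
    rw [h1]
  · -- containing a
    rw [Finset.mul_sum]
    refine Finset.sum_bij' (fun t ht => t.erase a (Finset.mem_filter.mp ht).2)
      (fun t _ => a ::ₛ t) ?_ ?_ ?_ ?_ ?_
    · intro t ht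
      rw [Finset.mem_sym_iff]
      intro l hl
      exact Finset.mem_sym_iff.mp (Finset.mem_filter.mp ht).1 l
        (Multiset.mem_of_mem_erase hl)
    · intro t ht
      rw [Finset.mem_filter]
      refine ⟨Finset.mem_sym_iff.mpr fun l hl => ?_, Sym.mem_cons_self a t⟩
      rcases Sym.mem_cons.mp hl with h | h
      · subst h; exact Finset.mem_Icc.mpr ⟨le_rfl, hab⟩
      · exact Finset.mem_sym_iff.mp ht l h
    · intro t ht
      exact Sym.cons_erase _
    · intro t ht
      exact Sym.erase_cons_head t a
    · intro t ht
      conv_lhs => rw [← Sym.cons_erase (Finset.mem_filter.mp ht).2]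
      simp [Sym.cons]

lemma hseg_key {K : Type*} [Field K] (x : ℕ → K) (i j : ℕ) (hij : i < j) :
    ∀ m, hseg (Function.update x (i + 1) (x i)) (m + 1) (i + 1) j
        - hseg x (m + 1) (i + 1) j = (x i - x (i + 1)) * hseg x m i j := by
  set y := Function.update x (i + 1) (x i) with hy
  have h1j : i + 1 ≤ j := hij
  have hcongr : ∀ m', hseg y m' (i + 2) j = hseg x m' (i + 2) j := by
    intro m'
    refine hseg_congr fun l hl => ?_
    have hl' := (Finset.mem_Icc.mp hl).1
    rw [hy, Function.update_of_ne (by omega)]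
  intro m
  induction m with
  | zero =>
      rw [hseg_peel y 0 (i + 1) j h1j, hseg_peel x 0 (i + 1) j h1j, hcongr,
        hseg_zero, hseg_zero, hseg_zero, hy, Function.update_self]
      ring
  | succ k IH =>
      rw [hseg_peel y (k + 1) (i + 1) j h1j, hseg_peel x (k + 1) (i + 1) j h1j, hcongr,
        hseg_peel x k i j (le_of_lt hij)]
      have hupd : y (i + 1) = x i := Function.update_self _ _ _
      rw [hupd]
      linear_combination x i * IH

/-- With `x_l = e^{-a_l}` (so `e^{α_i} = x_{i+1}/x_i`) and `s_i` swapping `x_i` with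
`x_{i+1}`, the Demazure operator `D_i f = f + (1-e^{α_i})⁻¹ (s_i f - f)` sends
`h_m(e^{-a_{i+1}},…,e^{-a_j})` to `h_m(e^{-a_i},…,e^{-a_j})`, for
`1 ≤ i ≤ n-1`, `i < j ≤ n` and `m ≥ 0`. -/
theorem stmt10 {K : Type*} [Field K] (n i j m : ℕ)
    (hi1 : 1 ≤ i) (hin : i ≤ n - 1) (hij : i < j) (hjn : j ≤ n)
    (x : ℕ → K) (hx0 : ∀ l, 1 ≤ l → l ≤ n → x l ≠ 0) (hxd : x i ≠ x (i + 1))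
    (x' : ℕ → K)
    (hx' : x' = Function.update (Function.update x i (x (i + 1))) (i + 1) (x i)) :
    hseg x m (i + 1) j +
        (1 - x (i + 1) / x i)⁻¹ * (hseg x' m (i + 1) j - hseg x m (i + 1) j) =
      hseg x m i j := by
  have hx'e : hseg x' m (i + 1) j = hseg (Function.update x (i + 1) (x i)) m (i + 1) j := by
    refine hseg_congr fun l hl => ?_
    have hl' := (Finset.mem_Icc.mp hl).1
    rw [hx']
    rcases eq_or_ne l (i + 1) with rfl | h
    · rw [Function.update_self, Function.update_self]
    · rw [Function.update_of_ne h, Function.update_of_ne (by omega : l ≠ i),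
        Function.update_of_ne h]
  have hu : x i ≠ 0 := hx0 i hi1 (le_trans hin (Nat.sub_le n 1))
  have huv : x i - x (i + 1) ≠ 0 := sub_ne_zero.mpr hxd
  cases m with
  | zero => simp [hseg_zero]
  | succ k =>
      rw [hx'e, hseg_key x i j hij k, hseg_peel x k i j (le_of_lt hij)]
      have hc : (1 - x (i + 1) / x i) = (x i - x (i + 1)) / x i := by field_simp
      rw [hc, inv_div]
      field_simp
end

section
/- Let ι be the ring automorphism of R[Q_1,…,Q_{n-1}][z_1^{±1},…,z_n^{±1}] determined by ι(z_i) = z_{n-i+1}^{-1} and ι(Q_i) = Q_{n-i}, fixing R pointwise after the substitution ι(e^{a_i}) = e^{-a_{n-i+1}}. Let F_i^{(n)}(z,Q) = Σ_{J⊆{1,…,n},|J|=i} ∏_{j∈J,j+1∉J}(1-Q_j) ∏_{j∈J} z_j. Then z_1⋯z_n · ι(F_i^{(n)}) = F_{n-i}^{(n)} for 1 ≤ i ≤ n-1. -/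
open Finset

def reflCompl (n : ℕ) (J : Finset ℕ) : Finset ℕ :=
  (Icc 1 n \ J).image (fun j => n - j + 1)

def runEnds (J : Finset ℕ) : Finset ℕ :=
  J.filter (fun j => j + 1 ∉ J)

section Reflection

variable {n : ℕ} {J : Finset ℕ}

lemma mem_reflCompl {k : ℕ} : k ∈ reflCompl n J ↔ k ∈ Icc 1 n ∧ n - k + 1 ∉ J := by
  simp only [reflCompl, mem_image, mem_sdiff, mem_Icc]
  constructor
  · rintro ⟨j, ⟨hj, hjJ⟩, rfl⟩
    exact ⟨by omega, by rwa [show n - (n - j + 1) + 1 = j by omega]⟩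
  · rintro ⟨hk, hkJ⟩
    exact ⟨n - k + 1, ⟨by omega, hkJ⟩, by omega⟩

lemma reflCompl_subset : reflCompl n J ⊆ Icc 1 n :=
  fun _ hk => (mem_reflCompl.1 hk).1

lemma reflCompl_reflCompl (hJ : J ⊆ Icc 1 n) : reflCompl n (reflCompl n J) = J := by
  ext k
  simp only [mem_reflCompl, mem_Icc, not_and, not_not]
  constructor
  · rintro ⟨hk, hkJ⟩
    simpa [show n - (n - k + 1) + 1 = k by omega] using hkJ (by omega)
  · intro hkJ
    have hk := mem_Icc.1 (hJ hkJ)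
    exact ⟨hk, fun _ => by rwa [show n - (n - k + 1) + 1 = k by omega]⟩

lemma card_reflCompl (hJ : J ⊆ Icc 1 n) : #(reflCompl n J) = n - #J := by
  have hinj : Set.InjOn (fun j => n - j + 1) (Icc 1 n \ J : Finset ℕ) := by
    intro a ha b hb hab
    simp only [coe_sdiff, Set.mem_sdiff, mem_coe, mem_Icc] at ha hb
    simp only at hab
    omega
  rw [reflCompl, card_image_of_injOn hinj, card_sdiff_of_subset hJ, Nat.card_Icc,
    Nat.add_sub_cancel]

lemma reflCompl_mem_powersetCard {i : ℕ} (hJ : J ∈ powersetCard i (Icc 1 n)) :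
    reflCompl n J ∈ powersetCard (n - i) (Icc 1 n) := by
  rw [mem_powersetCard] at hJ ⊢
  exact ⟨reflCompl_subset, by rw [card_reflCompl hJ.1, hJ.2]⟩

lemma prod_reflCompl_mul_prod {M : Type*} [CommMonoid M] (hJ : J ⊆ Icc 1 n) (z : ℕ → M) :
    (∏ k ∈ reflCompl n J, z k) * ∏ j ∈ J, z (n - j + 1) = ∏ k ∈ Icc 1 n, z k := by
  have hinj : Set.InjOn (fun j => n - j + 1) (Icc 1 n : Finset ℕ) := by
    intro a ha b hb hab
    simp only [coe_Icc, Set.mem_Icc] at ha hb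
    simp only at hab
    omega
  have hreflect : ∏ j ∈ Icc 1 n, z (n - j + 1) = ∏ k ∈ Icc 1 n, z k := by
    refine prod_nbij' (fun j => n - j + 1) (fun j => n - j + 1) ?_ ?_ ?_ ?_ (fun _ _ => rfl) <;>
      · intro j hj
        simp only [mem_Icc] at hj ⊢
        omega
  rw [reflCompl, prod_image (hinj.mono (by simp)), prod_sdiff hJ, hreflect]

lemma mem_runEnds_reflCompl {k : ℕ} (hk1 : 1 ≤ k) (hkn : k < n) :
    k ∈ runEnds (reflCompl n J) ↔ n - k ∈ runEnds J := by
  simp only [runEnds, mem_filter, mem_reflCompl, mem_Icc, not_and, not_not,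
    show n - (k + 1) + 1 = n - k by omega]
  have hk : 1 ≤ k ∧ k ≤ n := ⟨hk1, hkn.le⟩
  have hk' : 1 ≤ k + 1 ∧ k + 1 ≤ n := by omega
  simp only [hk, hk', true_and, forall_const]
  exact and_comm

lemma prod_runEnds_reflCompl {M : Type*} [CommMonoid M] (hJ : J ⊆ Icc 1 n) (g : ℕ → M)
    (hg0 : g 0 = 1) (hgn : g n = 1) :
    ∏ j ∈ runEnds J, g (n - j) = ∏ k ∈ runEnds (reflCompl n J), g k := by
  have hrun {L : Finset ℕ} (hL : L ⊆ Icc 1 n) {j : ℕ} (hj : j ∈ (runEnds L).erase n) :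
      1 ≤ j ∧ j < n := by
    have := mem_Icc.1 (hL (mem_filter.1 (mem_of_mem_erase hj)).1)
    have := ne_of_mem_erase hj
    omega
  rw [← prod_erase _ (by rwa [Nat.sub_self]), ← prod_erase _ hgn]
  refine prod_nbij' (fun j => n - j) (fun k => n - k) ?_ ?_ ?_ ?_ (fun _ _ => rfl)
  · intro j hj
    obtain ⟨h1, h2⟩ := hrun hJ hj
    refine mem_erase.2 ⟨by omega, (mem_runEnds_reflCompl (by omega) (by omega)).2 ?_⟩
    rw [Nat.sub_sub_self h2.le]
    exact mem_of_mem_erase hj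
  · intro k hk
    obtain ⟨h1, h2⟩ := hrun reflCompl_subset hk
    exact mem_erase.2 ⟨by omega, (mem_runEnds_reflCompl h1 h2).1 (mem_of_mem_erase hk)⟩
  · intro j hj
    exact Nat.sub_sub_self (hrun hJ hj).2.le
  · intro k hk
    exact Nat.sub_sub_self (hrun reflCompl_subset hk).2.le

end Reflection

lemma todaF_eq_sum_runEnds {K : Type*} [Field K] (n : ℕ) (z Q : ℕ → K) (i : ℕ) :
    todaF n z Q i =
      ∑ J ∈ (Icc 1 n).powersetCard i, (∏ j ∈ runEnds J, (1 - Q j)) * ∏ j ∈ J, z j :=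
  rfl

theorem stmt16_general {K : Type*} [Field K] (n i : ℕ) (hin : i ≤ n - 1)
    (z Q : ℕ → K) (hz : ∀ j, 1 ≤ j → j ≤ n → z j ≠ 0)
    (hQ0 : Q 0 = 0) (hQn : Q n = 0) :
    (∏ j ∈ Finset.Icc 1 n, z j) *
        todaF n (fun j => (z (n - j + 1))⁻¹) (fun j => Q (n - j)) i =
      todaF n z Q (n - i) := by
  rw [todaF_eq_sum_runEnds, todaF_eq_sum_runEnds, mul_sum]
  refine sum_nbij' (reflCompl n) (reflCompl n) (fun _ => reflCompl_mem_powersetCard)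
    (fun J hJ => Nat.sub_sub_self (show i ≤ n by omega) ▸ reflCompl_mem_powersetCard hJ)
    (fun J hJ => reflCompl_reflCompl (mem_powersetCard.1 hJ).1)
    (fun J hJ => reflCompl_reflCompl (mem_powersetCard.1 hJ).1) ?_
  intro J hJ
  have hJ : J ⊆ Icc 1 n := (mem_powersetCard.1 hJ).1
  have hreflected_ne : ∏ j ∈ J, z (n - j + 1) ≠ 0 := by
    refine prod_ne_zero_iff.2 fun j hj => ?_
    have := mem_Icc.1 (hJ hj)
    exact hz _ (by omega) (by omega)
  rw [prod_runEnds_reflCompl hJ (fun k => 1 - Q k) (by simp [hQ0]) (by simp [hQn]),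
    ← prod_reflCompl_mul_prod hJ z, prod_inv_distrib]
  field_simp

/-- With the involution `ι(z_j) = z_{n-j+1}⁻¹`, `ι(Q_j) = Q_{n-j}` (and the conventions
`Q_0 = Q_n = 0`), one has `z_1 ⋯ z_n · ι(F_i^{(n)}) = F_{n-i}^{(n)}` for
`1 ≤ i ≤ n-1`. -/
theorem stmt16 {K : Type*} [Field K] (n i : ℕ) (hi1 : 1 ≤ i) (hin : i ≤ n - 1)
    (z Q : ℕ → K) (hz : ∀ j, 1 ≤ j → j ≤ n → z j ≠ 0)
    (hQ0 : Q 0 = 0) (hQn : Q n = 0) :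
    (∏ j ∈ Finset.Icc 1 n, z j) *
        todaF n (fun j => (z (n - j + 1))⁻¹) (fun j => Q (n - j)) i =
      todaF n z Q (n - i) :=
  stmt16_general n i hin z Q hz hQ0 hQn
end
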